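/- arXiv:2509.06062 — 5 statements merged into one kernel-verified Lean document; each statement's English description precedes it below -/
import Mathlib

section
/- Let f, g : ℝ² → ℝ be C¹ and let γ : [0,1] → (0,∞)×(0,∞) be a C¹ curve such that for all t ∈ [0,1]: γ'(t) ≠ 0, the gradient ∇f(γ(t)) ≠ 0, and f(γ(t)) = 0 (γ lies on the f-isocline). Suppose g(γ(0)) = 0, g(γ(1)) = 0, g(γ(t)) ≠ 0 for all t ∈ (0,1), and the derivatives of t ↦ g(γ(t)) at t = 0 and t = 1 are nonzero (the isoclines cross transversally at the two equilibria). Define D(p) = (∂f/∂x)(p)·(∂g/∂y)(p) − (∂f/∂y)(p)·(∂g/∂x)(p). Then D(γ(0))·D(γ(1)) < 0; i.e., the sign of the Jacobian determinant of the system ẋ = x·f(x,y), ẏ = y·g(x,y) alternates at consecutive equilibria along the isocline, so equilibria of index +1 and index −1 alternate (Theorem 3.1, C¹ transversal form). -/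
/-!
Along the f-isocline, `f ∘ γ = 0` forces `γ'` to be orthogonal to `∇f`, so
`|∇f|² γ' = c · (-f_y, f_x)` with `c = f_x γ'₂ - f_y γ'₁`. The chain rule then gives
`|∇f|² (g ∘ γ)' = c · D(γ)`. The scalar `c` is continuous and never vanishes on `[0, 1]`,
so it has the same sign at both ends, while `g ∘ γ` has simple zeros at `0` and `1` and no
zero in between, so its derivatives there have opposite signs. Hence so do `D(γ 0)` and
`D(γ 1)`.
-/

open Set

/-- Partial derivative with respect to the first coordinate. -/
noncomputable def pdx (f : ℝ × ℝ → ℝ) (p : ℝ × ℝ) : ℝ := fderiv ℝ f p (1, 0)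

/-- Partial derivative with respect to the second coordinate. -/
noncomputable def pdy (f : ℝ × ℝ → ℝ) (p : ℝ × ℝ) : ℝ := fderiv ℝ f p (0, 1)

/-- D(p) = f_x g_y - f_y g_x, the sign-determining factor of the Jacobian
determinant of the system ẋ = x f(x,y), ẏ = y g(x,y) at an interior equilibrium. -/
noncomputable def Dfun (f g : ℝ × ℝ → ℝ) (p : ℝ × ℝ) : ℝ :=
  pdx f p * pdy g p - pdy f p * pdx g p

open Filter Topology

lemma IsPreconnected.mul_pos_of_ne_zero {X : Type*} [TopologicalSpace X] {s : Set X}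
    (hs : IsPreconnected s) {h : X → ℝ} (hc : ContinuousOn h s) (hne : ∀ x ∈ s, h x ≠ 0)
    {x y : X} (hx : x ∈ s) (hy : y ∈ s) : 0 < h x * h y := by
  by_contra! hxy
  have zero_mem_image : (0 : ℝ) ∈ h '' s := by
    rcases mul_nonpos_iff.1 hxy with ⟨hx0, hy0⟩ | ⟨hx0, hy0⟩
    · exact hs.intermediate_value hy hx hc ⟨hy0, hx0⟩
    · exact hs.intermediate_value hx hy hc ⟨hx0, hy0⟩
  obtain ⟨z, hz, hz0⟩ := zero_mem_image
  exact hne z hz hz0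

section RealDerivatives

variable {h : ℝ → ℝ} {a b d : ℝ}

lemma HasDerivAt.nonneg_of_eventually_ge_nhdsGT (hd : HasDerivAt h d a)
    (hge : ∀ᶠ t in 𝓝[>] a, h a ≤ h t) : 0 ≤ d := by
  have hslope := (hasDerivWithinAt_iff_tendsto_slope' (s := Ioi a) (by simp)).1 hd.hasDerivWithinAt
  refine ge_of_tendsto hslope ?_
  filter_upwards [hge, self_mem_nhdsWithin] with t ht hta
  rw [slope_def_field]
  exact div_nonneg (sub_nonneg.2 ht) (sub_pos.2 hta).le

lemma HasDerivAt.nonpos_of_eventually_ge_nhdsLT (hd : HasDerivAt h d b)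
    (hge : ∀ᶠ t in 𝓝[<] b, h b ≤ h t) : d ≤ 0 := by
  have hslope := (hasDerivWithinAt_iff_tendsto_slope' (s := Iio b) (by simp)).1 hd.hasDerivWithinAt
  refine le_of_tendsto hslope ?_
  filter_upwards [hge, self_mem_nhdsWithin] with t ht htb
  rw [slope_def_field]
  exact div_nonpos_of_nonneg_of_nonpos (sub_nonneg.2 ht) (sub_neg.2 htb).le

lemma HasDerivAt.eq_zero_of_eqOn_Icc {c t : ℝ} (hab : a < b)
    (hd : HasDerivAt h d t) (ht : t ∈ Icc a b) (hconst : ∀ s ∈ Icc a b, h s = c) : d = 0 :=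
  (uniqueDiffOn_Icc hab t ht).eq_deriv _ hd.hasDerivWithinAt
    ((hasDerivWithinAt_const t _ c).congr hconst (hconst t ht))

lemma mul_nonpos_of_hasDerivAt_of_pos_between {d₀ d₁ : ℝ} (hab : a < b)
    (ha : h a = 0) (hb : h b = 0) (hpos : ∀ t ∈ Ioo a b, 0 < h t)
    (hd₀ : HasDerivAt h d₀ a) (hd₁ : HasDerivAt h d₁ b) : d₀ * d₁ ≤ 0 := by
  refine mul_nonpos_of_nonneg_of_nonpos ?_ ?_
  · refine hd₀.nonneg_of_eventually_ge_nhdsGT ?_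
    filter_upwards [Ioo_mem_nhdsGT hab] with t ht
    exact ha ▸ (hpos t ht).le
  · refine hd₁.nonpos_of_eventually_ge_nhdsLT ?_
    filter_upwards [Ioo_mem_nhdsLT hab] with t ht
    exact hb ▸ (hpos t ht).le

lemma mul_neg_of_hasDerivAt_of_consecutive_zeros {d₀ d₁ : ℝ} (hab : a < b)
    (hc : ContinuousOn h (Ioo a b)) (ha : h a = 0) (hb : h b = 0)
    (hne : ∀ t ∈ Ioo a b, h t ≠ 0) (hd₀ : HasDerivAt h d₀ a) (hd₁ : HasDerivAt h d₁ b)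
    (hd₀ne : d₀ ≠ 0) (hd₁ne : d₁ ≠ 0) : d₀ * d₁ < 0 := by
  obtain ⟨m, hm⟩ : (Ioo a b).Nonempty := nonempty_Ioo.2 hab
  have hsign (t) (ht : t ∈ Ioo a b) : 0 < h m * h t :=
    isPreconnected_Ioo.mul_pos_of_ne_zero hc hne hm ht
  refine lt_of_le_of_ne ?_ (mul_ne_zero hd₀ne hd₁ne)
  rcases (hne m hm).lt_or_gt with hm_neg | hm_pos
  · have := mul_nonpos_of_hasDerivAt_of_pos_between (h := fun t => -h t) hab
      (neg_eq_zero.2 ha) (neg_eq_zero.2 hb)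
      (fun t ht => neg_pos.2 (neg_of_mul_pos_right (hsign t ht) hm_neg.le)) hd₀.neg hd₁.neg
    linarith
  · exact mul_nonpos_of_hasDerivAt_of_pos_between hab ha hb
      (fun t ht => pos_of_mul_pos_right (hsign t ht) hm_pos.le) hd₀ hd₁

end RealDerivatives

section PlaneCalculus

variable {f : ℝ × ℝ → ℝ} {γ : ℝ → ℝ × ℝ}

lemma fderiv_apply_eq_pdx_pdy (f : ℝ × ℝ → ℝ) (p w : ℝ × ℝ) :
    fderiv ℝ f p w = pdx f p * w.1 + pdy f p * w.2 := by
  have hw : w = w.1 • ((1 : ℝ), (0 : ℝ)) + w.2 • ((0 : ℝ), (1 : ℝ)) := by ext <;> simp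
  conv_lhs => rw [hw, map_add, map_smul, map_smul]
  simp only [pdx, pdy, smul_eq_mul]
  ring

lemma pdx_sq_add_pdy_sq_pos {p : ℝ × ℝ} (h : fderiv ℝ f p ≠ 0) :
    0 < pdx f p ^ 2 + pdy f p ^ 2 := by
  contrapose! h
  have hx : pdx f p = 0 := by nlinarith [sq_nonneg (pdx f p), sq_nonneg (pdy f p)]
  have hy : pdy f p = 0 := by nlinarith [sq_nonneg (pdx f p), sq_nonneg (pdy f p)]
  refine ContinuousLinearMap.ext fun w => ?_
  simp [fderiv_apply_eq_pdx_pdy, hx, hy]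

lemma hasDerivAt_comp_curve {t : ℝ} (hf : DifferentiableAt ℝ f (γ t))
    (hγ : DifferentiableAt ℝ γ t) :
    HasDerivAt (fun s => f (γ s))
      (pdx f (γ t) * (deriv γ t).1 + pdy f (γ t) * (deriv γ t).2) t := by
  rw [← fderiv_apply_eq_pdx_pdy]
  exact hf.hasFDerivAt.comp_hasDerivAt t hγ.hasDerivAt

lemma pdx_mul_add_pdy_mul_eq_zero_of_isocline {a b t : ℝ} (hab : a < b)
    (hf : Differentiable ℝ f) (hγ : Differentiable ℝ γ) (ht : t ∈ Icc a b)
    (hiso : ∀ s ∈ Icc a b, f (γ s) = 0) :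
    pdx f (γ t) * (deriv γ t).1 + pdy f (γ t) * (deriv γ t).2 = 0 :=
  (hasDerivAt_comp_curve (hf _) (hγ t)).eq_zero_of_eqOn_Icc hab ht hiso

end PlaneCalculus

lemma cross_ne_zero_of_dot_eq_zero {a b u v : ℝ} (hab : 0 < a ^ 2 + b ^ 2) (huv : (u, v) ≠ 0)
    (hdot : a * u + b * v = 0) : a * v - b * u ≠ 0 := by
  intro hcross
  apply huv
  have hu : (a ^ 2 + b ^ 2) * u = 0 := by linear_combination a * hdot - b * hcross
  have hv : (a ^ 2 + b ^ 2) * v = 0 := by linear_combination b * hdot + a * hcross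
  simp [(mul_eq_zero.1 hu).resolve_left hab.ne', (mul_eq_zero.1 hv).resolve_left hab.ne']

theorem index_alternation_general
    (f g : ℝ × ℝ → ℝ) (hf : ContDiff ℝ 1 f) (hg : ContDiff ℝ 1 g)
    (γ : ℝ → ℝ × ℝ) (hγ : ContDiff ℝ 1 γ)
    (hγ' : ∀ t ∈ Icc (0:ℝ) 1, deriv γ t ≠ 0)
    (hgrad : ∀ t ∈ Icc (0:ℝ) 1, fderiv ℝ f (γ t) ≠ 0)
    (hiso : ∀ t ∈ Icc (0:ℝ) 1, f (γ t) = 0)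
    (hg0 : g (γ 0) = 0) (hg1 : g (γ 1) = 0)
    (hgne : ∀ t ∈ Ioo (0:ℝ) 1, g (γ t) ≠ 0)
    (htrans0 : deriv (fun t => g (γ t)) 0 ≠ 0)
    (htrans1 : deriv (fun t => g (γ t)) 1 ≠ 0) :
    Dfun f g (γ 0) * Dfun f g (γ 1) < 0 := by
  have hfd : Differentiable ℝ f := hf.differentiable one_ne_zero
  have hgd : Differentiable ℝ g := hg.differentiable one_ne_zero
  have hγd : Differentiable ℝ γ := hγ.differentiable one_ne_zero
  have h0 : (0 : ℝ) ∈ Icc (0 : ℝ) 1 := left_mem_Icc.2 zero_le_one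
  have h1 : (1 : ℝ) ∈ Icc (0 : ℝ) 1 := right_mem_Icc.2 zero_le_one
  set L : ℝ → ℝ := deriv fun s => g (γ s)
  set N : ℝ → ℝ := fun t => pdx f (γ t) ^ 2 + pdy f (γ t) ^ 2
  set c : ℝ → ℝ := fun t => pdx f (γ t) * (deriv γ t).2 - pdy f (γ t) * (deriv γ t).1
  have hL (t : ℝ) : HasDerivAt (fun s => g (γ s)) (L t) t :=
    ((hgd (γ t)).comp t (hγd t)).hasDerivAt
  have hN (t) (ht : t ∈ Icc (0 : ℝ) 1) : 0 < N t := pdx_sq_add_pdy_sq_pos (hgrad t ht)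
  have hdot (t) (ht : t ∈ Icc (0 : ℝ) 1) :=
    pdx_mul_add_pdy_mul_eq_zero_of_isocline one_pos hfd hγd ht hiso
  have hc_cont : Continuous c := by
    have hfγ := (hf.continuous_fderiv one_ne_zero).comp hγ.continuous
    have hγ'c := hγ.continuous_deriv le_rfl
    unfold c pdx pdy
    fun_prop
  have hc : 0 < c 0 * c 1 := isPreconnected_Icc.mul_pos_of_ne_zero hc_cont.continuousOn
    (fun t ht => cross_ne_zero_of_dot_eq_zero (hN t ht) (hγ' t ht) (hdot t ht)) h0 h1
  -- `N (g ∘ γ)' = c D + (∇f · γ') (∇f · ∇g)`, whose last term vanishes on the isocline.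
  have hslope (t) (ht : t ∈ Icc (0 : ℝ) 1) : N t * L t = c t * Dfun f g (γ t) := by
    rw [(hL t).unique (hasDerivAt_comp_curve (hgd (γ t)) (hγd t)), Dfun]
    linear_combination (pdx f (γ t) * pdx g (γ t) + pdy f (γ t) * pdy g (γ t)) * hdot t ht
  have hL01 : L 0 * L 1 < 0 := mul_neg_of_hasDerivAt_of_consecutive_zeros one_pos
    (hg.continuous.comp hγ.continuous).continuousOn hg0 hg1 hgne (hL 0) (hL 1) htrans0 htrans1
  have hneg : c 0 * c 1 * (Dfun f g (γ 0) * Dfun f g (γ 1)) < 0 :=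
    calc c 0 * c 1 * (Dfun f g (γ 0) * Dfun f g (γ 1))
        = (c 0 * Dfun f g (γ 0)) * (c 1 * Dfun f g (γ 1)) := by ring
      _ = N 0 * N 1 * (L 0 * L 1) := by rw [← hslope 0 h0, ← hslope 1 h1]; ring
      _ < 0 := mul_neg_of_pos_of_neg (mul_pos (hN 0 h0) (hN 1 h1)) hL01
  exact neg_of_mul_neg_right hneg hc.le

/-- Theorem 3.1 (C¹ transversal form): the sign of the Jacobian determinant
alternates at consecutive equilibria along the f-isocline. -/
theorem index_alternation
    (f g : ℝ × ℝ → ℝ) (hf : ContDiff ℝ 1 f) (hg : ContDiff ℝ 1 g)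
    (γ : ℝ → ℝ × ℝ) (hγ : ContDiff ℝ 1 γ)
    (hpos : ∀ t ∈ Icc (0:ℝ) 1, 0 < (γ t).1 ∧ 0 < (γ t).2)
    (hγ' : ∀ t ∈ Icc (0:ℝ) 1, deriv γ t ≠ 0)
    (hgrad : ∀ t ∈ Icc (0:ℝ) 1, fderiv ℝ f (γ t) ≠ 0)
    (hiso : ∀ t ∈ Icc (0:ℝ) 1, f (γ t) = 0)
    (hg0 : g (γ 0) = 0) (hg1 : g (γ 1) = 0)
    (hgne : ∀ t ∈ Ioo (0:ℝ) 1, g (γ t) ≠ 0)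
    (htrans0 : deriv (fun t => g (γ t)) 0 ≠ 0)
    (htrans1 : deriv (fun t => g (γ t)) 1 ≠ 0) :
    Dfun f g (γ 0) * Dfun f g (γ 1) < 0 :=
  index_alternation_general f g hf hg γ hγ hγ' hgrad hiso hg0 hg1 hgne htrans0 htrans1
end

section
/- Let f, g : ℝ² → ℝ be C¹ with ∂f/∂x < 0 and ∂g/∂y < 0 everywhere on the open positive quadrant (intraspecific competition for both species). Let γ : [0,1] → (0,∞)×(0,∞) be a C¹ curve with γ'(t) ≠ 0 and ∇f(γ(t)) ≠ 0 and f(γ(t)) = 0 for all t, with g(γ(0)) = g(γ(1)) = 0, g(γ(t)) ≠ 0 on (0,1), and nonzero derivatives of t ↦ g(γ(t)) at t = 0 and t = 1. Then exactly one of the two equilibria γ(0), γ(1) is an attractive node (all eigenvalues of its Jacobian have negative real part) and the other is a saddle point (its Jacobian has real eigenvalues of opposite sign): attractive nodes and saddle points alternate along the isoclines (Corollary 3.2). -/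
/-!
Differentiating `f (γ t) = 0` gives `γ₁' f_x + γ₂' f_y = 0` along the isocline, so `γ₂'` never
vanishes (as `f_x < 0` and `γ' ≠ 0`) and keeps one sign on `[0, 1]`. Eliminating `γ₁'` from the
chain rule for `g ∘ γ` gives `γ₂' · det J(γ t) = x y f_x · (g ∘ γ)'(t)`. Since `g ∘ γ` vanishes
at both ends and nowhere in between, its derivatives at `0` and `1` have opposite signs, hence so
do the Jacobian determinants at `γ 0` and `γ 1`. A negative determinant gives a saddle; a positive
one, together with the negative trace `x f_x + y g_y`, gives an attractive node.
-/

open Set Polynomial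

/-- The Jacobian of the system ẋ = x f(x,y), ẏ = y g(x,y) at an equilibrium p. -/
noncomputable def jac (f g : ℝ × ℝ → ℝ) (p : ℝ × ℝ) : Matrix (Fin 2) (Fin 2) ℝ :=
  !![p.1 * pdx f p, p.1 * pdy f p; p.2 * pdx g p, p.2 * pdy g p]

/-- An attractive node: all eigenvalues of the Jacobian have negative real part. -/
def IsAttractiveNode (f g : ℝ × ℝ → ℝ) (p : ℝ × ℝ) : Prop :=
  ∀ μ : ℂ, (((jac f g p).map Complex.ofReal).charpoly).IsRoot μ → μ.re < 0

/-- A saddle point: the Jacobian has two real eigenvalues of opposite sign. -/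
def IsSaddlePoint (f g : ℝ × ℝ → ℝ) (p : ℝ × ℝ) : Prop :=
  ∃ l₁ l₂ : ℝ, l₁ < 0 ∧ 0 < l₂ ∧
    ((jac f g p).charpoly).IsRoot l₁ ∧ ((jac f g p).charpoly).IsRoot l₂

theorem Matrix.isRoot_charpoly_fin_two_iff {R : Type*} [CommRing R] [Nontrivial R]
    (M : Matrix (Fin 2) (Fin 2) R) (μ : R) :
    M.charpoly.IsRoot μ ↔ μ ^ 2 - M.trace * μ + M.det = 0 := by
  simp [Matrix.charpoly_fin_two]

theorem Complex.re_neg_of_sq_sub_mul_add_eq_zero {t d : ℝ} (ht : t < 0) (hd : 0 < d) {μ : ℂ}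
    (hμ : μ ^ 2 - t * μ + d = 0) : μ.re < 0 := by
  obtain ⟨hre, him⟩ := Complex.ext_iff.mp hμ
  simp only [pow_two, Complex.add_re, Complex.sub_re, Complex.mul_re, Complex.mul_im,
    Complex.add_im, Complex.sub_im, Complex.ofReal_re, Complex.ofReal_im, Complex.zero_re,
    Complex.zero_im] at hre him
  have him' : μ.im * (2 * μ.re - t) = 0 := by linear_combination him
  rcases mul_eq_zero.mp him' with hreal | hre_eq
  · rw [hreal] at hre
    nlinarith
  · linarith

theorem exists_neg_pos_roots_of_sq_sub_mul_add {t d : ℝ} (hd : d < 0) :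
    ∃ l₁ l₂ : ℝ, l₁ < 0 ∧ 0 < l₂ ∧ l₁ ^ 2 - t * l₁ + d = 0 ∧ l₂ ^ 2 - t * l₂ + d = 0 := by
  set s := √(t ^ 2 - 4 * d)
  have hs : s ^ 2 = t ^ 2 - 4 * d := Real.sq_sqrt (by nlinarith)
  have hs_pos : 0 < s := Real.sqrt_pos.mpr (by nlinarith)
  have hprod : (t - s) / 2 * ((t + s) / 2) < 0 := by linear_combination hd - hs / 4
  obtain ⟨h₁, h₂⟩ | ⟨h₁, h₂⟩ := mul_neg_iff.mp hprod
  · linarith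
  · exact ⟨_, _, h₁, h₂, by linear_combination hs / 4, by linear_combination hs / 4⟩

theorem Matrix.re_neg_of_isRoot_charpoly_map_ofReal {M : Matrix (Fin 2) (Fin 2) ℝ}
    (htr : M.trace < 0) (hdet : 0 < M.det) {μ : ℂ}
    (hμ : (M.map Complex.ofReal).charpoly.IsRoot μ) : μ.re < 0 := by
  refine Complex.re_neg_of_sq_sub_mul_add_eq_zero htr hdet ?_
  rw [Matrix.isRoot_charpoly_fin_two_iff] at hμ
  simpa [Matrix.trace_fin_two, Matrix.det_fin_two] using hμ

theorem Matrix.exists_isRoot_charpoly_neg_pos {M : Matrix (Fin 2) (Fin 2) ℝ} (hdet : M.det < 0) :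
    ∃ l₁ l₂ : ℝ, l₁ < 0 ∧ 0 < l₂ ∧ M.charpoly.IsRoot l₁ ∧ M.charpoly.IsRoot l₂ := by
  simpa only [Matrix.isRoot_charpoly_fin_two_iff] using exists_neg_pos_roots_of_sq_sub_mul_add hdet

theorem isAttractiveNode_of_det_pos {f g : ℝ × ℝ → ℝ} {p : ℝ × ℝ} (hx : 0 < p.1) (hy : 0 < p.2)
    (hfx : pdx f p < 0) (hgy : pdy g p < 0) (hdet : 0 < (jac f g p).det) :
    IsAttractiveNode f g p := by
  have htr : (jac f g p).trace < 0 := by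
    rw [jac, Matrix.trace_fin_two_of]
    nlinarith
  exact fun μ hμ => Matrix.re_neg_of_isRoot_charpoly_map_ofReal htr hdet hμ

theorem deriv_nonneg_of_isMinOn_Icc_left {h : ℝ → ℝ} {a b : ℝ} (hab : a < b)
    (hmin : IsMinOn h (Icc a b) a) (hd : DifferentiableAt ℝ h a) : 0 ≤ deriv h a := by
  have hcone : b - a ∈ posTangentConeAt (Icc a b) a :=
    sub_mem_posTangentConeAt_of_segment_subset (segment_eq_Icc hab.le).subset
  have hdir :=
    hmin.localize.hasFDerivWithinAt_nonneg hd.hasDerivAt.hasFDerivAt.hasFDerivWithinAt hcone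
  simp only [ContinuousLinearMap.toSpanSingleton_apply, smul_eq_mul] at hdir
  exact nonneg_of_mul_nonneg_right hdir (sub_pos.2 hab)

theorem deriv_nonpos_of_isMinOn_Icc_right {h : ℝ → ℝ} {a b : ℝ} (hab : a < b)
    (hmin : IsMinOn h (Icc a b) b) (hd : DifferentiableAt ℝ h b) : deriv h b ≤ 0 := by
  have hcone : a - b ∈ posTangentConeAt (Icc a b) b :=
    sub_mem_posTangentConeAt_of_segment_subset
      ((segment_symm ℝ b a).trans_subset (segment_eq_Icc hab.le).subset)
  have hdir :=
    hmin.localize.hasFDerivWithinAt_nonneg hd.hasDerivAt.hasFDerivAt.hasFDerivWithinAt hcone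
  simp only [ContinuousLinearMap.toSpanSingleton_apply, smul_eq_mul] at hdir
  exact nonpos_of_mul_nonneg_right hdir (sub_neg.2 hab)

theorem IsPreconnected.mul_pos_of_ne_zero_s3 {S : Set ℝ} (hS : IsPreconnected S) {h : ℝ → ℝ}
    (hh : ContinuousOn h S) (hne : ∀ t ∈ S, h t ≠ 0) {s t : ℝ} (hs : s ∈ S) (ht : t ∈ S) :
    0 < h s * h t := by
  by_contra! hst
  have hzero : (0 : ℝ) ∈ h '' S := by
    rcases mul_nonpos_iff.mp hst with ⟨hs0, ht0⟩ | ⟨hs0, ht0⟩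
    · exact hS.intermediate_value ht hs hh ⟨ht0, hs0⟩
    · exact hS.intermediate_value hs ht hh ⟨hs0, ht0⟩
  obtain ⟨c, hc, hc0⟩ := hzero
  exact hne c hc hc0

theorem deriv_mul_deriv_nonpos_of_ne_zero_on_Ioo {h : ℝ → ℝ} {a b : ℝ} (hab : a < b)
    (hc : ContinuousOn h (Icc a b)) (ha : h a = 0) (hb : h b = 0)
    (hne : ∀ t ∈ Ioo a b, h t ≠ 0) (hda : DifferentiableAt ℝ h a)
    (hdb : DifferentiableAt ℝ h b) : deriv h a * deriv h b ≤ 0 := by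
  obtain ⟨m, hm⟩ := nonempty_Ioo.mpr hab
  -- multiplying by `h m` makes `h` nonnegative on `[a, b]`, with minima at both endpoints
  have hnonneg : ∀ t ∈ Icc a b, 0 ≤ h m * h t := by
    intro t ht
    rcases eq_endpoints_or_mem_Ioo_of_mem_Icc ht with rfl | rfl | ht'
    · simp [ha]
    · simp [hb]
    · exact (isPreconnected_Ioo.mul_pos_of_ne_zero_s3 (hc.mono Ioo_subset_Icc_self) hne hm ht').le
  have hmin_a : IsMinOn (fun t => h m * h t) (Icc a b) a := fun t ht => by
    simpa [ha] using hnonneg t ht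
  have hmin_b : IsMinOn (fun t => h m * h t) (Icc a b) b := fun t ht => by
    simpa [hb] using hnonneg t ht
  have hda' := deriv_nonneg_of_isMinOn_Icc_left hab hmin_a (hda.const_mul _)
  have hdb' := deriv_nonpos_of_isMinOn_Icc_right hab hmin_b (hdb.const_mul _)
  rw [deriv_const_mul _ hda] at hda'
  rw [deriv_const_mul _ hdb] at hdb'
  refine nonpos_of_mul_nonpos_left ?_ (pow_two_pos_of_ne_zero (hne m hm))
  linear_combination mul_nonpos_of_nonneg_of_nonpos hda' hdb'

theorem deriv_eq_zero_of_eqOn_Icc {u : ℝ → ℝ} {a b c t : ℝ} (hab : a < b)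
    (hu : EqOn u (fun _ => c) (Icc a b)) (hd : DifferentiableAt ℝ u t) (ht : t ∈ Icc a b) :
    deriv u t = 0 := by
  rw [← hd.derivWithin (uniqueDiffOn_Icc hab t ht), derivWithin_congr hu (hu ht)]
  exact congrFun (derivWithin_fun_const _ _) t

theorem fderiv_apply_eq_pdx_add_pdy (F : ℝ × ℝ → ℝ) (p v : ℝ × ℝ) :
    fderiv ℝ F p v = v.1 * pdx F p + v.2 * pdy F p := by
  have hv : v = v.1 • ((1 : ℝ), (0 : ℝ)) + v.2 • ((0 : ℝ), (1 : ℝ)) := by ext <;> simp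
  rw [pdx, pdy]
  conv_lhs => rw [hv]
  rw [map_add, map_smul, map_smul, smul_eq_mul, smul_eq_mul]

theorem snd_ne_zero_of_fderiv_apply_eq_zero {F : ℝ × ℝ → ℝ} {p v : ℝ × ℝ} (hv : v ≠ 0)
    (hx : pdx F p ≠ 0) (h : fderiv ℝ F p v = 0) : v.2 ≠ 0 := by
  intro hv₂
  rw [fderiv_apply_eq_pdx_add_pdy, hv₂, zero_mul, add_zero] at h
  exact hv (Prod.ext ((mul_eq_zero.mp h).resolve_right hx) hv₂)

theorem snd_mul_det_jac_of_fderiv_apply_eq_zero {f g : ℝ × ℝ → ℝ} {p v : ℝ × ℝ}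
    (h : fderiv ℝ f p v = 0) :
    v.2 * (jac f g p).det = p.1 * p.2 * pdx f p * fderiv ℝ g p v := by
  rw [fderiv_apply_eq_pdx_add_pdy] at h ⊢
  rw [jac, Matrix.det_fin_two_of]
  linear_combination (-(p.1 * p.2 * pdx g p)) * h

section Isocline

variable {f g : ℝ × ℝ → ℝ} {γ : ℝ → ℝ × ℝ} {a b t : ℝ}

theorem fderiv_apply_deriv_eq_zero_of_isocline (hab : a < b) (hf : DifferentiableAt ℝ f (γ t))
    (hγ : DifferentiableAt ℝ γ t) (hiso : ∀ s ∈ Icc a b, f (γ s) = 0) (ht : t ∈ Icc a b) :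
    fderiv ℝ f (γ t) (deriv γ t) = 0 := by
  rw [← fderiv_comp_deriv t hf hγ]
  exact deriv_eq_zero_of_eqOn_Icc hab hiso (hf.comp t hγ) ht

theorem deriv_snd_mul_det_jac_of_isocline (hab : a < b) (hf : DifferentiableAt ℝ f (γ t))
    (hg : DifferentiableAt ℝ g (γ t)) (hγ : DifferentiableAt ℝ γ t)
    (hiso : ∀ s ∈ Icc a b, f (γ s) = 0) (ht : t ∈ Icc a b) :
    (deriv γ t).2 * (jac f g (γ t)).det =
      (γ t).1 * (γ t).2 * pdx f (γ t) * deriv (fun s => g (γ s)) t := by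
  rw [snd_mul_det_jac_of_fderiv_apply_eq_zero
    (fderiv_apply_deriv_eq_zero_of_isocline hab hf hγ hiso ht)]
  exact congrArg _ (fderiv_comp_deriv t hg hγ).symm

theorem deriv_snd_mul_deriv_snd_pos_of_isocline (hab : a < b) (hf : Differentiable ℝ f)
    (hγ : ContDiff ℝ 1 γ) (hfx : ∀ t ∈ Icc a b, pdx f (γ t) ≠ 0)
    (hγ' : ∀ t ∈ Icc a b, deriv γ t ≠ 0) (hiso : ∀ t ∈ Icc a b, f (γ t) = 0) :
    0 < (deriv γ a).2 * (deriv γ b).2 :=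
  isPreconnected_Icc.mul_pos_of_ne_zero_s3 (hγ.continuous_deriv le_rfl).snd.continuousOn
    (fun t ht => snd_ne_zero_of_fderiv_apply_eq_zero (hγ' t ht) (hfx t ht)
      (fderiv_apply_deriv_eq_zero_of_isocline hab (hf _)
        (hγ.differentiable one_ne_zero t) hiso ht))
    (left_mem_Icc.mpr hab.le) (right_mem_Icc.mpr hab.le)

end Isocline

theorem attractive_saddle_alternation_general
    (f g : ℝ × ℝ → ℝ) (hf : ContDiff ℝ 1 f) (hg : ContDiff ℝ 1 g)
    (hcomp : ∀ p : ℝ × ℝ, 0 < p.1 → 0 < p.2 → pdx f p < 0 ∧ pdy g p < 0)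
    (γ : ℝ → ℝ × ℝ) (hγ : ContDiff ℝ 1 γ)
    (hpos : ∀ t ∈ Icc (0:ℝ) 1, 0 < (γ t).1 ∧ 0 < (γ t).2)
    (hγ' : ∀ t ∈ Icc (0:ℝ) 1, deriv γ t ≠ 0)
    (hiso : ∀ t ∈ Icc (0:ℝ) 1, f (γ t) = 0)
    (hg0 : g (γ 0) = 0) (hg1 : g (γ 1) = 0)
    (hgne : ∀ t ∈ Ioo (0:ℝ) 1, g (γ t) ≠ 0)
    (htrans0 : deriv (fun t => g (γ t)) 0 ≠ 0)
    (htrans1 : deriv (fun t => g (γ t)) 1 ≠ 0) :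
    (IsAttractiveNode f g (γ 0) ∧ IsSaddlePoint f g (γ 1)) ∨
    (IsSaddlePoint f g (γ 0) ∧ IsAttractiveNode f g (γ 1)) := by
  have h0 : (0 : ℝ) ∈ Icc 0 1 := left_mem_Icc.mpr zero_le_one
  have h1 : (1 : ℝ) ∈ Icc 0 1 := right_mem_Icc.mpr zero_le_one
  have hγd : Differentiable ℝ γ := hγ.differentiable one_ne_zero
  have hfd : Differentiable ℝ f := hf.differentiable one_ne_zero
  have hgd : Differentiable ℝ g := hg.differentiable one_ne_zero
  have hgγ : Differentiable ℝ fun t => g (γ t) := hgd.comp hγd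
  have hcomp' : ∀ t ∈ Icc (0 : ℝ) 1, pdx f (γ t) < 0 ∧ pdy g (γ t) < 0 :=
    fun t ht => hcomp _ (hpos t ht).1 (hpos t ht).2
  have hw : ∀ t ∈ Icc (0 : ℝ) 1, (γ t).1 * (γ t).2 * pdx f (γ t) < 0 := fun t ht =>
    mul_neg_of_pos_of_neg (mul_pos (hpos t ht).1 (hpos t ht).2) (hcomp' t ht).1
  have hkey : ∀ t ∈ Icc (0 : ℝ) 1, (deriv γ t).2 * (jac f g (γ t)).det =
      (γ t).1 * (γ t).2 * pdx f (γ t) * deriv (fun s => g (γ s)) t := fun t ht =>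
    deriv_snd_mul_det_jac_of_isocline zero_lt_one (hfd _) (hgd _) (hγd t) hiso ht
  have hγ₂ : 0 < (deriv γ 0).2 * (deriv γ 1).2 :=
    deriv_snd_mul_deriv_snd_pos_of_isocline zero_lt_one hfd hγ
      (fun t ht => (hcomp' t ht).1.ne) hγ' hiso
  have hg₂ : deriv (fun s => g (γ s)) 0 * deriv (fun s => g (γ s)) 1 < 0 :=
    (deriv_mul_deriv_nonpos_of_ne_zero_on_Ioo zero_lt_one hgγ.continuous.continuousOn
      hg0 hg1 hgne (hgγ 0) (hgγ 1)).lt_of_ne (mul_ne_zero htrans0 htrans1)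
  have hdet : (jac f g (γ 0)).det * (jac f g (γ 1)).det < 0 := by
    refine neg_of_mul_neg_right ?_ hγ₂.le
    rw [mul_mul_mul_comm, hkey 0 h0, hkey 1 h1, mul_mul_mul_comm]
    exact mul_neg_of_pos_of_neg (mul_pos_of_neg_of_neg (hw 0 h0) (hw 1 h1)) hg₂
  rcases mul_neg_iff.mp hdet with ⟨hpos₀, hneg₁⟩ | ⟨hneg₀, hpos₁⟩
  · exact .inl ⟨isAttractiveNode_of_det_pos (hpos 0 h0).1 (hpos 0 h0).2 (hcomp' 0 h0).1
      (hcomp' 0 h0).2 hpos₀, Matrix.exists_isRoot_charpoly_neg_pos hneg₁⟩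
  · exact .inr ⟨Matrix.exists_isRoot_charpoly_neg_pos hneg₀, isAttractiveNode_of_det_pos
      (hpos 1 h1).1 (hpos 1 h1).2 (hcomp' 1 h1).1 (hcomp' 1 h1).2 hpos₁⟩

/-- Corollary 3.2: under intraspecific competition for both species, attractive
nodes and saddle points alternate along the isoclines. -/
theorem attractive_saddle_alternation
    (f g : ℝ × ℝ → ℝ) (hf : ContDiff ℝ 1 f) (hg : ContDiff ℝ 1 g)
    (hcomp : ∀ p : ℝ × ℝ, 0 < p.1 → 0 < p.2 → pdx f p < 0 ∧ pdy g p < 0)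
    (γ : ℝ → ℝ × ℝ) (hγ : ContDiff ℝ 1 γ)
    (hpos : ∀ t ∈ Icc (0:ℝ) 1, 0 < (γ t).1 ∧ 0 < (γ t).2)
    (hγ' : ∀ t ∈ Icc (0:ℝ) 1, deriv γ t ≠ 0)
    (hgrad : ∀ t ∈ Icc (0:ℝ) 1, fderiv ℝ f (γ t) ≠ 0)
    (hiso : ∀ t ∈ Icc (0:ℝ) 1, f (γ t) = 0)
    (hg0 : g (γ 0) = 0) (hg1 : g (γ 1) = 0)
    (hgne : ∀ t ∈ Ioo (0:ℝ) 1, g (γ t) ≠ 0)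
    (htrans0 : deriv (fun t => g (γ t)) 0 ≠ 0)
    (htrans1 : deriv (fun t => g (γ t)) 1 ≠ 0) :
    (IsAttractiveNode f g (γ 0) ∧ IsSaddlePoint f g (γ 1)) ∨
    (IsSaddlePoint f g (γ 0) ∧ IsAttractiveNode f g (γ 1)) :=
  attractive_saddle_alternation_general f g hf hg hcomp γ hγ hpos hγ' hiso hg0 hg1 hgne htrans0
    htrans1
end

section
/- Let f, g : ℝ² → ℝ be C¹ with ∂f/∂x > 0 and ∂g/∂y > 0 everywhere on the open positive quadrant (intraspecific cooperation for both species). Let γ : [0,1] → (0,∞)×(0,∞) be a C¹ curve with γ'(t) ≠ 0 and ∇f(γ(t)) ≠ 0 and f(γ(t)) = 0 for all t, with g(γ(0)) = g(γ(1)) = 0, g(γ(t)) ≠ 0 on (0,1), and nonzero derivatives of t ↦ g(γ(t)) at t = 0 and t = 1. Then exactly one of the two equilibria γ(0), γ(1) is a repulsive node (all eigenvalues of its Jacobian have positive real part) and the other is a saddle point (its Jacobian has real eigenvalues of opposite sign): repulsive nodes and saddle points alternate along the isoclines (Corollary 3.3). -/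
/-!
Write `D = ∂f/∂x ∂g/∂y - ∂f/∂y ∂g/∂x`. At an interior equilibrium the Jacobian of the system has
determinant `x y D` and, by cooperation, positive trace, so it is a saddle when `D < 0` and a
repulsive node when `D > 0`. Along the isocline `f ∘ γ = 0` the tangent satisfies
`∂f/∂x γ₁' + ∂f/∂y γ₂' = 0`; as `∂f/∂x > 0` and `γ' ≠ 0`, `γ₂'` never vanishes and keeps one sign,
and eliminating `γ₁'` gives `∂f/∂x (g ∘ γ)' = D γ₂'`. The endpoints are consecutive simple zeros of
`g ∘ γ`, so `(g ∘ γ)'` has opposite signs there, hence so does `D`.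
-/

open Set Polynomial

/-- A repulsive node: all eigenvalues of the Jacobian have positive real part. -/
def IsRepulsiveNode (f g : ℝ × ℝ → ℝ) (p : ℝ × ℝ) : Prop :=
  ∀ μ : ℂ, (((jac f g p).map Complex.ofReal).charpoly).IsRoot μ → μ.re > 0

lemma IsPreconnected.forall_pos_or_forall_neg {X α : Type*} [TopologicalSpace X] [LinearOrder α]
    [TopologicalSpace α] [OrderClosedTopology α] [Zero α] {s : Set X} (hs : IsPreconnected s)
    {h : X → α} (hc : ContinuousOn h s) (hne : ∀ x ∈ s, h x ≠ 0) :
    (∀ x ∈ s, 0 < h x) ∨ (∀ x ∈ s, h x < 0) := by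
  by_contra! ⟨⟨x, hx, hx0⟩, ⟨y, hy, hy0⟩⟩
  obtain ⟨z, hz, hz0⟩ := hs.intermediate_value hx hy hc ⟨hx0, hy0⟩
  exact hne z hz hz0

lemma HasDerivAt.nonneg_of_nonneg_Ioo {h : ℝ → ℝ} {a b d : ℝ} (hd : HasDerivAt h d a)
    (hab : a < b) (ha : h a = 0) (hpos : ∀ t ∈ Ioo a b, 0 ≤ h t) : 0 ≤ d := by
  refine ge_of_tendsto hd.tendsto_slope_zero_right ?_
  filter_upwards [Ioo_mem_nhdsGT (sub_pos.2 hab)] with t ht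
  rw [ha, sub_zero, smul_eq_mul]
  exact mul_nonneg (inv_nonneg.2 ht.1.le) (hpos _ ⟨by linarith [ht.1], by linarith [ht.2]⟩)

lemma HasDerivAt.nonpos_of_nonneg_Ioo {h : ℝ → ℝ} {a b d : ℝ} (hd : HasDerivAt h d b)
    (hab : a < b) (hb : h b = 0) (hpos : ∀ t ∈ Ioo a b, 0 ≤ h t) : d ≤ 0 := by
  refine le_of_tendsto hd.tendsto_slope_zero_left ?_
  filter_upwards [Ioo_mem_nhdsLT (sub_neg.2 hab)] with t ht
  rw [hb, sub_zero, smul_eq_mul]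
  exact mul_nonpos_of_nonpos_of_nonneg (inv_nonpos.2 ht.2.le)
    (hpos _ ⟨by linarith [ht.1], by linarith [ht.2]⟩)

lemma mul_neg_of_hasDerivAt_of_adjacent_zeros {h : ℝ → ℝ} {a b d₀ d₁ : ℝ} (hab : a < b)
    (hc : ContinuousOn h (Ioo a b)) (ha : h a = 0) (hb : h b = 0)
    (hne : ∀ t ∈ Ioo a b, h t ≠ 0) (hd₀ : HasDerivAt h d₀ a) (hd₁ : HasDerivAt h d₁ b)
    (h₀ : d₀ ≠ 0) (h₁ : d₁ ≠ 0) : d₀ * d₁ < 0 := by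
  rcases isPreconnected_Ioo.forall_pos_or_forall_neg hc hne with hpos | hneg
  · have hpos' : ∀ t ∈ Ioo a b, 0 ≤ h t := fun t ht => (hpos t ht).le
    exact mul_neg_of_pos_of_neg ((hd₀.nonneg_of_nonneg_Ioo hab ha hpos').lt_of_ne' h₀)
      ((hd₁.nonpos_of_nonneg_Ioo hab hb hpos').lt_of_ne h₁)
  · have hneg' : ∀ t ∈ Ioo a b, 0 ≤ -h t := fun t ht => (neg_pos.2 (hneg t ht)).le
    have e₀ := hd₀.neg.nonneg_of_nonneg_Ioo hab (by simp [ha]) hneg'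
    have e₁ := hd₁.neg.nonpos_of_nonneg_Ioo hab (by simp [hb]) hneg'
    exact mul_neg_of_neg_of_pos ((neg_nonneg.1 e₀).lt_of_ne h₀) ((neg_nonpos.1 e₁).lt_of_ne' h₁)

lemma Matrix.exists_isRoot_charpoly_neg_pos_of_det_neg (M : Matrix (Fin 2) (Fin 2) ℝ)
    (h : M.det < 0) : ∃ l₁ l₂ : ℝ, l₁ < 0 ∧ 0 < l₂ ∧ M.charpoly.IsRoot l₁ ∧ M.charpoly.IsRoot l₂ := by
  have hdisc : 0 ≤ M.trace ^ 2 - 4 * M.det := by nlinarith [sq_nonneg M.trace]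
  set s := √(M.trace ^ 2 - 4 * M.det)
  have hs : s ^ 2 = M.trace ^ 2 - 4 * M.det := Real.sq_sqrt hdisc
  have hs0 : 0 ≤ s := Real.sqrt_nonneg _
  have hroot : ∀ l, l = (M.trace - s) / 2 ∨ l = (M.trace + s) / 2 → M.charpoly.IsRoot l := by
    rintro l (rfl | rfl) <;>
    · simp only [Polynomial.IsRoot, M.charpoly_fin_two, Polynomial.eval_add, Polynomial.eval_sub,
        Polynomial.eval_mul, Polynomial.eval_pow, Polynomial.eval_X, Polynomial.eval_C]
      linear_combination hs / 4
  refine ⟨(M.trace - s) / 2, (M.trace + s) / 2, ?_, ?_, hroot _ (.inl rfl), hroot _ (.inr rfl)⟩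
  · nlinarith [sq_nonneg (s - M.trace), sq_nonneg (s + M.trace)]
  · nlinarith [sq_nonneg (s - M.trace), sq_nonneg (s + M.trace)]

lemma Matrix.re_pos_of_isRoot_charpoly_map (M : Matrix (Fin 2) (Fin 2) ℝ) (htr : 0 < M.trace)
    (hdet : 0 < M.det) {μ : ℂ} (hμ : (M.map Complex.ofReal).charpoly.IsRoot μ) : 0 < μ.re := by
  have hq : μ ^ 2 - M.trace * μ + M.det = 0 := by
    rw [Matrix.charpoly_fin_two] at hμ
    simpa [Matrix.trace_fin_two, Matrix.det_fin_two] using hμ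
  have hre := congrArg Complex.re hq
  have him := congrArg Complex.im hq
  simp only [pow_two, Complex.add_re, Complex.sub_re, Complex.mul_re, Complex.ofReal_re,
    Complex.ofReal_im, zero_mul, sub_zero, Complex.zero_re, Complex.add_im, Complex.sub_im,
    Complex.mul_im, add_zero, Complex.zero_im] at hre him
  by_cases hy : μ.im = 0
  · rw [hy] at hre
    by_contra! hx
    nlinarith [mul_nonneg (neg_nonneg.2 hx) htr.le]
  · have : μ.im * (2 * μ.re - M.trace) = 0 := by linear_combination him
    linarith [(mul_eq_zero.1 this).resolve_left hy]

lemma fderiv_apply_eq_pdx_mul_add_pdy_mul (f : ℝ × ℝ → ℝ) (p v : ℝ × ℝ) :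
    fderiv ℝ f p v = pdx f p * v.1 + pdy f p * v.2 := by
  have hv : v = v.1 • ((1 : ℝ), (0 : ℝ)) + v.2 • ((0 : ℝ), (1 : ℝ)) := by ext <;> simp
  conv_lhs => rw [hv]
  rw [map_add, map_smul, map_smul, smul_eq_mul, smul_eq_mul, pdx, pdy, mul_comm, mul_comm v.2]

lemma fderiv_apply_deriv_eq_zero_of_comp_eq_zero_on_Icc {f : ℝ × ℝ → ℝ} {γ : ℝ → ℝ × ℝ}
    {a b t : ℝ} (hab : a < b) (hf : DifferentiableAt ℝ f (γ t)) (hγ : DifferentiableAt ℝ γ t)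
    (hiso : ∀ s ∈ Icc a b, f (γ s) = 0) (ht : t ∈ Icc a b) :
    fderiv ℝ f (γ t) (deriv γ t) = 0 :=
  (uniqueDiffOn_Icc hab t ht).eq_deriv _
    (hf.hasFDerivAt.comp_hasDerivAt t hγ.hasDerivAt).hasDerivWithinAt
    ((hasDerivWithinAt_const t _ 0).congr hiso (hiso t ht))

-- The `D` of the header: the Jacobian determinant of `(f, g)`, not of the system.
noncomputable def jacobianDet (f g : ℝ × ℝ → ℝ) (p : ℝ × ℝ) : ℝ :=
  pdx f p * pdy g p - pdy f p * pdx g p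

lemma det_jac (f g : ℝ × ℝ → ℝ) (p : ℝ × ℝ) :
    (jac f g p).det = p.1 * p.2 * jacobianDet f g p := by
  rw [jac, Matrix.det_fin_two_of, jacobianDet]
  ring

lemma trace_jac (f g : ℝ × ℝ → ℝ) (p : ℝ × ℝ) :
    (jac f g p).trace = p.1 * pdx f p + p.2 * pdy g p := by
  simp [jac, Matrix.trace_fin_two]

lemma isRepulsiveNode_of_jacobianDet_pos {f g : ℝ × ℝ → ℝ} {p : ℝ × ℝ} (hx : 0 < p.1)
    (hy : 0 < p.2) (hfx : 0 < pdx f p) (hgy : 0 < pdy g p) (hD : 0 < jacobianDet f g p) :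
    IsRepulsiveNode f g p := fun _ hμ =>
  (jac f g p).re_pos_of_isRoot_charpoly_map (by rw [trace_jac]; positivity)
    (by rw [det_jac]; positivity) hμ

lemma isSaddlePoint_of_jacobianDet_neg {f g : ℝ × ℝ → ℝ} {p : ℝ × ℝ} (hx : 0 < p.1)
    (hy : 0 < p.2) (hD : jacobianDet f g p < 0) : IsSaddlePoint f g p :=
  (jac f g p).exists_isRoot_charpoly_neg_pos_of_det_neg
    (by rw [det_jac]; exact mul_neg_of_pos_of_neg (mul_pos hx hy) hD)

lemma jacobianDet_mul_neg_of_isocline_arc {f g : ℝ × ℝ → ℝ} {γ : ℝ → ℝ × ℝ} {a b : ℝ}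
    (hab : a < b) (hf : Differentiable ℝ f) (hg : Differentiable ℝ g) (hγ : ContDiff ℝ 1 γ)
    (hfx : ∀ t ∈ Icc a b, 0 < pdx f (γ t)) (hγ' : ∀ t ∈ Icc a b, deriv γ t ≠ 0)
    (hiso : ∀ t ∈ Icc a b, f (γ t) = 0) (hga : g (γ a) = 0) (hgb : g (γ b) = 0)
    (hgne : ∀ t ∈ Ioo a b, g (γ t) ≠ 0) (hda : deriv (fun t => g (γ t)) a ≠ 0)
    (hdb : deriv (fun t => g (γ t)) b ≠ 0) :
    jacobianDet f g (γ a) * jacobianDet f g (γ b) < 0 := by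
  have hγd := hγ.differentiable one_ne_zero
  have ha : a ∈ Icc a b := left_mem_Icc.2 hab.le
  have hb : b ∈ Icc a b := right_mem_Icc.2 hab.le
  set G' := fun t => fderiv ℝ g (γ t) (deriv γ t)
  have hG : ∀ t, HasDerivAt (fun s => g (γ s)) (G' t) t := fun t =>
    (hg _).hasFDerivAt.comp_hasDerivAt t (hγd t).hasDerivAt
  have htan : ∀ t ∈ Icc a b,
      pdx f (γ t) * (deriv γ t).1 + pdy f (γ t) * (deriv γ t).2 = 0 := fun t ht => by
    rw [← fderiv_apply_eq_pdx_mul_add_pdy_mul]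
    exact fderiv_apply_deriv_eq_zero_of_comp_eq_zero_on_Icc hab (hf _) (hγd t) hiso ht
  have hpdx_mul_G' : ∀ t ∈ Icc a b, pdx f (γ t) * G' t = jacobianDet f g (γ t) * (deriv γ t).2 :=
    fun t ht => by
      simp only [G', fderiv_apply_eq_pdx_mul_add_pdy_mul, jacobianDet]
      linear_combination pdx g (γ t) * htan t ht
  have hγ₂_ne : ∀ t ∈ Icc a b, (deriv γ t).2 ≠ 0 := fun t ht h2 => by
    have h1 : (deriv γ t).1 = 0 := by
      have := htan t ht
      rw [h2, mul_zero, add_zero] at this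
      exact (mul_eq_zero.1 this).resolve_left (hfx t ht).ne'
    exact hγ' t ht (Prod.ext h1 h2)
  have hγ₂_sign : 0 < (deriv γ a).2 * (deriv γ b).2 := by
    rcases isPreconnected_Icc.forall_pos_or_forall_neg
      (hγ.continuous_deriv le_rfl).snd.continuousOn hγ₂_ne with h | h
    · exact mul_pos (h a ha) (h b hb)
    · exact mul_pos_of_neg_of_neg (h a ha) (h b hb)
  have hGG : G' a * G' b < 0 :=
    mul_neg_of_hasDerivAt_of_adjacent_zeros hab
      ((hg.continuous.comp hγ.continuous).continuousOn) hga hgb hgne (hG a) (hG b)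
      (by rwa [← (hG a).deriv]) (by rwa [← (hG b).deriv])
  have hprod :
      jacobianDet f g (γ a) * jacobianDet f g (γ b) * ((deriv γ a).2 * (deriv γ b).2) < 0 :=
    calc _ = pdx f (γ a) * pdx f (γ b) * (G' a * G' b) := by
          linear_combination -(pdx f (γ b) * G' b) * hpdx_mul_G' a ha -
            jacobianDet f g (γ a) * (deriv γ a).2 * hpdx_mul_G' b hb
      _ < 0 := mul_neg_of_pos_of_neg (mul_pos (hfx a ha) (hfx b hb)) hGG
  exact neg_of_mul_neg_left hprod hγ₂_sign.le

theorem repulsive_saddle_alternation_general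
    (f g : ℝ × ℝ → ℝ) (hf : ContDiff ℝ 1 f) (hg : ContDiff ℝ 1 g)
    (hcomp : ∀ p : ℝ × ℝ, 0 < p.1 → 0 < p.2 → pdx f p > 0 ∧ pdy g p > 0)
    (γ : ℝ → ℝ × ℝ) (hγ : ContDiff ℝ 1 γ)
    (hpos : ∀ t ∈ Icc (0:ℝ) 1, 0 < (γ t).1 ∧ 0 < (γ t).2)
    (hγ' : ∀ t ∈ Icc (0:ℝ) 1, deriv γ t ≠ 0)
    (hiso : ∀ t ∈ Icc (0:ℝ) 1, f (γ t) = 0)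
    (hg0 : g (γ 0) = 0) (hg1 : g (γ 1) = 0)
    (hgne : ∀ t ∈ Ioo (0:ℝ) 1, g (γ t) ≠ 0)
    (htrans0 : deriv (fun t => g (γ t)) 0 ≠ 0)
    (htrans1 : deriv (fun t => g (γ t)) 1 ≠ 0) :
    (IsRepulsiveNode f g (γ 0) ∧ IsSaddlePoint f g (γ 1)) ∨
    (IsSaddlePoint f g (γ 0) ∧ IsRepulsiveNode f g (γ 1)) := by
  have hD := jacobianDet_mul_neg_of_isocline_arc zero_lt_one (hf.differentiable one_ne_zero)
    (hg.differentiable one_ne_zero) hγ (fun t ht => (hcomp _ (hpos t ht).1 (hpos t ht).2).1)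
    hγ' hiso hg0 hg1 hgne htrans0 htrans1
  have node : ∀ t ∈ Icc (0:ℝ) 1, 0 < jacobianDet f g (γ t) → IsRepulsiveNode f g (γ t) :=
    fun t ht => isRepulsiveNode_of_jacobianDet_pos (hpos t ht).1 (hpos t ht).2
      (hcomp _ (hpos t ht).1 (hpos t ht).2).1 (hcomp _ (hpos t ht).1 (hpos t ht).2).2
  have saddle : ∀ t ∈ Icc (0:ℝ) 1, jacobianDet f g (γ t) < 0 → IsSaddlePoint f g (γ t) :=
    fun t ht => isSaddlePoint_of_jacobianDet_neg (hpos t ht).1 (hpos t ht).2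
  have h0 : (0:ℝ) ∈ Icc (0:ℝ) 1 := left_mem_Icc.2 zero_le_one
  have h1 : (1:ℝ) ∈ Icc (0:ℝ) 1 := right_mem_Icc.2 zero_le_one
  rcases mul_neg_iff.1 hD with ⟨hD0, hD1⟩ | ⟨hD0, hD1⟩
  · exact .inl ⟨node 0 h0 hD0, saddle 1 h1 hD1⟩
  · exact .inr ⟨saddle 0 h0 hD0, node 1 h1 hD1⟩

/-- Corollary 3.3: under intraspecific cooperation for both species, repulsive
nodes and saddle points alternate along the isoclines. -/
theorem repulsive_saddle_alternation
    (f g : ℝ × ℝ → ℝ) (hf : ContDiff ℝ 1 f) (hg : ContDiff ℝ 1 g)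
    (hcomp : ∀ p : ℝ × ℝ, 0 < p.1 → 0 < p.2 → pdx f p > 0 ∧ pdy g p > 0)
    (γ : ℝ → ℝ × ℝ) (hγ : ContDiff ℝ 1 γ)
    (hpos : ∀ t ∈ Icc (0:ℝ) 1, 0 < (γ t).1 ∧ 0 < (γ t).2)
    (hγ' : ∀ t ∈ Icc (0:ℝ) 1, deriv γ t ≠ 0)
    (hgrad : ∀ t ∈ Icc (0:ℝ) 1, fderiv ℝ f (γ t) ≠ 0)
    (hiso : ∀ t ∈ Icc (0:ℝ) 1, f (γ t) = 0)
    (hg0 : g (γ 0) = 0) (hg1 : g (γ 1) = 0)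
    (hgne : ∀ t ∈ Ioo (0:ℝ) 1, g (γ t) ≠ 0)
    (htrans0 : deriv (fun t => g (γ t)) 0 ≠ 0)
    (htrans1 : deriv (fun t => g (γ t)) 1 ≠ 0) :
    (IsRepulsiveNode f g (γ 0) ∧ IsSaddlePoint f g (γ 1)) ∨
    (IsSaddlePoint f g (γ 0) ∧ IsRepulsiveNode f g (γ 1)) :=
  repulsive_saddle_alternation_general f g hf hg hcomp γ hγ hpos hγ' hiso hg0 hg1 hgne htrans0
    htrans1
end

section
/- Let f, g : ℝ² → ℝ be C¹ and let U ⊆ (0,∞)×(0,∞) be a convex open set on which ∂f/∂y > 0, ∂g/∂x > 0 (strict mutualism), ∂f/∂x < 0 and ∂g/∂y < 0 (the sign configuration near an attractive strictly mutualistic equilibrium). Then the system ẋ = x·f(x,y), ẏ = y·g(x,y) admits no nonconstant periodic solution whose image is contained in U; in particular, no (repulsive) limit cycle surrounding an attractive strictly mutualistic equilibrium can lie in U (Theorem 4.2). -/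
/-!
Along a solution of `ẋ = x f(x, y)`, `ẏ = y g(x, y)` the per-capita growth rates
`u = f(x, y)`, `v = g(x, y)` solve the linear system
`u' = (x ∂f/∂x) u + (y ∂f/∂y) v`, `v' = (x ∂g/∂x) u + (y ∂g/∂y) v`,
whose off-diagonal coefficients are positive under strict mutualism. Such a cooperative system
keeps the open positive quadrant forward invariant: at a first exit time one of `u, v` vanishes
while its derivative is the other one times a positive coefficient. Similarly, once `u` changes
sign from negative to positive, at its last zero `v` must be positive, so the trajectory enters
that quadrant; in both arguments `u = v = 0` at one time would force `u ≡ v ≡ 0` by Grönwall.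
For a periodic solution `u` is periodic, so it cannot take both signs. Hence `x' = x u` has
constant sign and the periodic function `x` is monotone, hence constant; likewise for `y`.
-/

open Set

open Function

theorem Function.Periodic.eq_of_monotone {f : ℝ → ℝ} {T : ℝ} (hp : Periodic f T)
    (hT : 0 < T) (hf : Monotone f) (s t : ℝ) : f s = f t := by
  wlog hst : s ≤ t generalizing s t
  · exact (this t s (le_of_not_ge hst)).symm
  obtain ⟨r, hr, hsr⟩ := hp.exists_mem_Ico hT s t
  exact le_antisymm (hf hst) (hsr ▸ hf hr.1)

theorem Function.Periodic.eq_of_hasDerivAt_mul {x u : ℝ → ℝ} {T : ℝ} (hp : Periodic x T)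
    (hT : 0 < T) (hpos : ∀ t, 0 < x t) (hx : ∀ t, HasDerivAt x (x t * u t) t)
    (hu : (∀ t, 0 ≤ u t) ∨ ∀ t, u t ≤ 0) (s t : ℝ) : x s = x t := by
  rcases hu with hu | hu
  · exact hp.eq_of_monotone hT
      (monotone_of_hasDerivAt_nonneg hx fun t ↦ mul_nonneg (hpos t).le (hu t)) s t
  · have hanti := antitone_of_hasDerivAt_nonpos hx fun t ↦
      mul_nonpos_of_nonneg_of_nonpos (hpos t).le (hu t)
    exact neg_inj.1 ((hp.comp Neg.neg).eq_of_monotone hT hanti.neg s t)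

theorem eq_zero_of_norm_deriv_le_mul_norm_of_le {E : Type*} [NormedAddCommGroup E]
    [NormedSpace ℝ E] {w w' : ℝ → E} {k : ℝ → ℝ} {t₀ t : ℝ}
    (hw : ∀ t, HasDerivAt w (w' t) t) (hk : Continuous k)
    (hbound : ∀ t, ‖w' t‖ ≤ k t * ‖w t‖) (h₀ : w t₀ = 0) (ht : t₀ ≤ t) : w t = 0 := by
  obtain ⟨K, hK⟩ :=
    (isCompact_Icc (a := t₀) (b := t)).exists_bound_of_continuousOn hk.continuousOn
  refine eq_zero_of_abs_deriv_le_mul_abs_self_of_eq_zero_right (K := K)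
    (fun s _ ↦ (hw s).continuousAt.continuousWithinAt) (fun s _ ↦ (hw s).hasDerivWithinAt)
    h₀ (fun s hs ↦ ?_) t ⟨ht, le_rfl⟩
  calc ‖w' s‖ ≤ k s * ‖w s‖ := hbound s
    _ ≤ K * ‖w s‖ := by
      gcongr
      exact (le_abs_self _).trans (hK s (Ico_subset_Icc_self hs))

theorem eq_zero_of_norm_deriv_le_mul_norm {E : Type*} [NormedAddCommGroup E]
    [NormedSpace ℝ E] {w w' : ℝ → E} {k : ℝ → ℝ} {t₀ : ℝ}
    (hw : ∀ t, HasDerivAt w (w' t) t) (hk : Continuous k)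
    (hbound : ∀ t, ‖w' t‖ ≤ k t * ‖w t‖) (h₀ : w t₀ = 0) (t : ℝ) : w t = 0 := by
  rcases le_total t₀ t with ht | ht
  · exact eq_zero_of_norm_deriv_le_mul_norm_of_le hw hk hbound h₀ ht
  · have hw_neg (s : ℝ) : HasDerivAt (fun s ↦ w (-s)) (-w' (-s)) s := by
      simpa using (hw (0 - s)).comp_const_sub 0 s
    simpa using eq_zero_of_norm_deriv_le_mul_norm_of_le (w := fun s ↦ w (-s)) hw_neg
      (hk.comp continuous_neg) (fun s ↦ by simpa using hbound (-s)) (by simpa using h₀)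
      (neg_le_neg ht)

theorem abs_mul_add_mul_le (a b p q : ℝ) : |a * p + b * q| ≤ (|a| + |b|) * max |p| |q| :=
  calc |a * p + b * q| ≤ |a| * |p| + |b| * |q| := by
        simpa only [abs_mul] using abs_add_le (a * p) (b * q)
    _ ≤ |a| * max |p| |q| + |b| * max |p| |q| := by gcongr <;> simp
    _ = (|a| + |b|) * max |p| |q| := by ring

theorem norm_prod_mul_add_mul_le (a b c d p q : ℝ) :
    ‖(a * p + b * q, c * p + d * q)‖ ≤ max (|a| + |b|) (|c| + |d|) * ‖(p, q)‖ := by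
  simp only [Prod.norm_def, Real.norm_eq_abs]
  have hm : 0 ≤ max |p| |q| := (abs_nonneg p).trans (le_max_left _ _)
  exact max_le
    ((abs_mul_add_mul_le a b p q).trans (by gcongr; exact le_max_left _ _))
    ((abs_mul_add_mul_le c d p q).trans (by gcongr; exact le_max_right _ _))

theorem Continuous.nonneg_of_forall_Ioo_nonneg {u : ℝ → ℝ} {a b : ℝ} (hu : Continuous u)
    (hab : a < b) (h : ∀ r ∈ Ioo a b, 0 ≤ u r) : ∀ r ∈ Icc a b, 0 ≤ u r := by
  rw [← closure_Ioo hab.ne]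
  exact ((isClosed_le continuous_const hu).closure_subset_iff).2 h

theorem HasDerivAt.nonneg_of_forall_Ioo_le {u : ℝ → ℝ} {d t b : ℝ} (hd : HasDerivAt u d t)
    (htb : t < b) (h : ∀ r ∈ Ioo t b, u t ≤ u r) : 0 ≤ d := by
  have hslope := (hasDerivWithinAt_iff_tendsto_slope' (by simp)).1
    (hd.hasDerivWithinAt (s := Ioi t))
  refine ge_of_tendsto hslope ?_
  filter_upwards [Ioo_mem_nhdsGT htb] with r hr
  rw [slope_def_field]
  exact div_nonneg (sub_nonneg.2 (h r hr)) (sub_nonneg.2 hr.1.le)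

theorem HasDerivAt.nonpos_of_forall_Ioo_le {u : ℝ → ℝ} {d t a : ℝ} (hd : HasDerivAt u d t)
    (hat : a < t) (h : ∀ r ∈ Ioo a t, u t ≤ u r) : d ≤ 0 := by
  have hslope := (hasDerivWithinAt_iff_tendsto_slope' (by simp)).1
    (hd.hasDerivWithinAt (s := Iio t))
  refine le_of_tendsto hslope ?_
  filter_upwards [Ioo_mem_nhdsLT hat] with r hr
  rw [slope_def_field]
  exact div_nonpos_of_nonneg_of_nonpos (sub_nonneg.2 (h r hr)) (sub_nonpos.2 hr.2.le)

structure IsCooperative (u v a b c d : ℝ → ℝ) : Prop where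
  hasDerivAt_fst : ∀ t, HasDerivAt u (a t * u t + b t * v t) t
  hasDerivAt_snd : ∀ t, HasDerivAt v (c t * u t + d t * v t) t
  continuous_a : Continuous a
  continuous_b : Continuous b
  continuous_c : Continuous c
  continuous_d : Continuous d
  b_pos : ∀ t, 0 < b t
  c_pos : ∀ t, 0 < c t

namespace IsCooperative

variable {u v a b c d : ℝ → ℝ}

theorem swap (h : IsCooperative u v a b c d) : IsCooperative v u d c b a where
  hasDerivAt_fst t := (h.hasDerivAt_snd t).congr_deriv (add_comm _ _)
  hasDerivAt_snd t := (h.hasDerivAt_fst t).congr_deriv (add_comm _ _)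
  continuous_a := h.continuous_d
  continuous_b := h.continuous_c
  continuous_c := h.continuous_b
  continuous_d := h.continuous_a
  b_pos := h.c_pos
  c_pos := h.b_pos

theorem continuous_fst (h : IsCooperative u v a b c d) : Continuous u :=
  continuous_iff_continuousAt.2 fun t ↦ (h.hasDerivAt_fst t).continuousAt

theorem continuous_snd (h : IsCooperative u v a b c d) : Continuous v := h.swap.continuous_fst

theorem eq_zero_of_eq_zero (h : IsCooperative u v a b c d) {t₀ : ℝ} (hu : u t₀ = 0)
    (hv : v t₀ = 0) (t : ℝ) : u t = 0 ∧ v t = 0 := by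
  have hk : Continuous fun t ↦ max (|a t| + |b t|) (|c t| + |d t|) := by
    have := h.continuous_a; have := h.continuous_b; have := h.continuous_c
    have := h.continuous_d
    fun_prop
  simpa using eq_zero_of_norm_deriv_le_mul_norm
    (fun t ↦ (h.hasDerivAt_fst t).prodMk (h.hasDerivAt_snd t)) hk
    (fun t ↦ norm_prod_mul_add_mul_le _ _ _ _ _ _) (t₀ := t₀) (by simp [hu, hv]) t

theorem fst_pos_of_forall_Ico_pos (h : IsCooperative u v a b c d) {s τ : ℝ} (hsτ : s < τ)
    (hpos : ∀ r ∈ Ico s τ, 0 < u r ∧ 0 < v r) : 0 < u τ := by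
  have hnonneg (r : ℝ) (hr : r ∈ Ioo s τ) : 0 ≤ u r ∧ 0 ≤ v r :=
    ⟨(hpos r (Ioo_subset_Ico_self hr)).1.le, (hpos r (Ioo_subset_Ico_self hr)).2.le⟩
  have hu := h.continuous_fst.nonneg_of_forall_Ioo_nonneg hsτ (fun r hr ↦ (hnonneg r hr).1)
    τ ⟨hsτ.le, le_rfl⟩
  have hv := h.continuous_snd.nonneg_of_forall_Ioo_nonneg hsτ (fun r hr ↦ (hnonneg r hr).2)
    τ ⟨hsτ.le, le_rfl⟩
  refine hu.lt_of_ne' fun hu0 ↦ ?_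
  have hv0 : v τ ≠ 0 := fun hv0 ↦
    (hpos s ⟨le_rfl, hsτ⟩).1.ne' (h.eq_zero_of_eq_zero hu0 hv0 s).1
  have hderiv := (h.hasDerivAt_fst τ).nonpos_of_forall_Ioo_le hsτ
    fun r hr ↦ hu0 ▸ (hnonneg r hr).1
  rw [hu0, mul_zero, zero_add] at hderiv
  exact (mul_pos (h.b_pos τ) (hv.lt_of_ne' hv0)).not_ge hderiv

theorem pos_of_pos_of_le (h : IsCooperative u v a b c d) {s t : ℝ} (hu : 0 < u s)
    (hv : 0 < v s) (hst : s ≤ t) : 0 < u t ∧ 0 < v t := by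
  by_contra hexit
  set S := {r ∈ Icc s t | ¬(0 < u r ∧ 0 < v r)}
  have hS : IsClosed S := isClosed_Icc.inter ((isOpen_lt continuous_const h.continuous_fst).inter
    (isOpen_lt continuous_const h.continuous_snd)).isClosed_compl
  have hbdd : BddBelow S := ⟨s, fun r hr ↦ hr.1.1⟩
  have hτ : sInf S ∈ S := hS.csInf_mem ⟨t, ⟨hst, le_rfl⟩, hexit⟩ hbdd
  have hpos (r : ℝ) (hr : r ∈ Ico s (sInf S)) : 0 < u r ∧ 0 < v r := by_contra fun hr' ↦
    (csInf_le hbdd ⟨⟨hr.1, hr.2.le.trans hτ.1.2⟩, hr'⟩).not_gt hr.2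
  have hsτ : s < sInf S := hτ.1.1.lt_of_ne fun hs ↦ hτ.2 (hs ▸ ⟨hu, hv⟩)
  exact hτ.2 ⟨h.fst_pos_of_forall_Ico_pos hsτ hpos,
    h.swap.fst_pos_of_forall_Ico_pos hsτ fun r hr ↦ (hpos r hr).symm⟩

theorem exists_pos_of_nonpos_of_pos (h : IsCooperative u v a b c d) {t₁ t₂ : ℝ}
    (h₁₂ : t₁ ≤ t₂) (hu₁ : u t₁ ≤ 0) (hu₂ : 0 < u t₂) : ∃ s, 0 < u s ∧ 0 < v s := by
  set S := {r ∈ Icc t₁ t₂ | u r ≤ 0}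
  have hS : IsClosed S := isClosed_Icc.inter (isClosed_le h.continuous_fst continuous_const)
  have hbdd : BddAbove S := ⟨t₂, fun r hr ↦ hr.1.2⟩
  have ht₀ : sSup S ∈ S := hS.csSup_mem ⟨t₁, ⟨le_rfl, h₁₂⟩, hu₁⟩ hbdd
  have hpos (r : ℝ) (hr : r ∈ Ioc (sSup S) t₂) : 0 < u r :=
    not_le.1 fun hr' ↦ (le_csSup hbdd ⟨⟨ht₀.1.1.trans hr.1.le, hr.2⟩, hr'⟩).not_gt hr.1
  have ht₀₂ : sSup S < t₂ := ht₀.1.2.lt_of_ne fun heq ↦ (heq ▸ ht₀.2).not_gt hu₂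
  have hu₀ : u (sSup S) = 0 := le_antisymm ht₀.2
    (h.continuous_fst.nonneg_of_forall_Ioo_nonneg ht₀₂
      (fun r hr ↦ (hpos r (Ioo_subset_Ioc_self hr)).le) _ ⟨le_rfl, ht₀₂.le⟩)
  have hderiv := (h.hasDerivAt_fst (sSup S)).nonneg_of_forall_Ioo_le ht₀₂
    fun r hr ↦ hu₀ ▸ (hpos r (Ioo_subset_Ioc_self hr)).le
  rw [hu₀, mul_zero, zero_add] at hderiv
  have hv₀ : 0 < v (sSup S) := by
    refine (nonneg_of_mul_nonneg_right hderiv (h.b_pos _)).lt_of_ne' fun hv₀ ↦ ?_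
    exact hu₂.ne' (h.eq_zero_of_eq_zero hu₀ hv₀ t₂).1
  obtain ⟨r, hv, hr⟩ := ((h.continuous_snd.continuousWithinAt.tendsto).eventually_const_lt hv₀
    |>.and (Ioc_mem_nhdsGT ht₀₂)).exists
  exact ⟨r, hpos r hr, hv⟩

theorem nonneg_or_nonpos_of_periodic (h : IsCooperative u v a b c d) {T : ℝ} (hT : 0 < T)
    (hu : Periodic u T) : (∀ t, 0 ≤ u t) ∨ ∀ t, u t ≤ 0 := by
  by_contra! hsign
  obtain ⟨⟨t₁, ht₁⟩, ⟨t₂, ht₂⟩⟩ := hsign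
  obtain ⟨t₂', ht₂', hu₂⟩ := hu.exists_mem_Ico hT t₂ t₁
  obtain ⟨s, hus, hvs⟩ := h.exists_pos_of_nonpos_of_pos ht₂'.1 ht₁.le (hu₂ ▸ ht₂)
  obtain ⟨t₁', ht₁', hu₁⟩ := hu.exists_mem_Ico hT t₁ s
  exact (h.pos_of_pos_of_le hus hvs ht₁'.1).1.not_gt (hu₁ ▸ ht₁)

end IsCooperative

theorem ContDiff.continuous_pdx {f : ℝ × ℝ → ℝ} (hf : ContDiff ℝ 1 f) :
    Continuous (pdx f) :=
  (hf.continuous_fderiv one_ne_zero).clm_apply continuous_const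

theorem ContDiff.continuous_pdy {f : ℝ × ℝ → ℝ} (hf : ContDiff ℝ 1 f) :
    Continuous (pdy f) :=
  (hf.continuous_fderiv one_ne_zero).clm_apply continuous_const

theorem DifferentiableAt.hasDerivAt_comp_prodMk {F : ℝ × ℝ → ℝ} {x y : ℝ → ℝ}
    {x' y' t : ℝ} (hF : DifferentiableAt ℝ F (x t, y t)) (hx : HasDerivAt x x' t)
    (hy : HasDerivAt y y' t) :
    HasDerivAt (fun s ↦ F (x s, y s)) (pdx F (x t, y t) * x' + pdy F (x t, y t) * y') t := by
  have hsplit : ((x', y') : ℝ × ℝ) = x' • (1, 0) + y' • (0, 1) := by simp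
  have hL : fderiv ℝ F (x t, y t) (x', y') = pdx F (x t, y t) * x' + pdy F (x t, y t) * y' := by
    rw [hsplit, map_add, map_smul, map_smul, smul_eq_mul, smul_eq_mul, pdx, pdy, mul_comm x',
      mul_comm y']
  exact hL ▸ hF.hasFDerivAt.comp_hasDerivAt t (hx.prodMk hy)

theorem IsCooperative.of_kolmogorov {f g : ℝ × ℝ → ℝ} (hf : ContDiff ℝ 1 f)
    (hg : ContDiff ℝ 1 g) {x y : ℝ → ℝ} (hx : ∀ t, HasDerivAt x (x t * f (x t, y t)) t)
    (hy : ∀ t, HasDerivAt y (y t * g (x t, y t)) t)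
    (hb : ∀ t, 0 < pdy f (x t, y t) * y t) (hc : ∀ t, 0 < pdx g (x t, y t) * x t) :
    IsCooperative (fun t ↦ f (x t, y t)) (fun t ↦ g (x t, y t))
      (fun t ↦ pdx f (x t, y t) * x t) (fun t ↦ pdy f (x t, y t) * y t)
      (fun t ↦ pdx g (x t, y t) * x t) (fun t ↦ pdy g (x t, y t) * y t) := by
  have hxc : Continuous x := continuous_iff_continuousAt.2 fun t ↦ (hx t).continuousAt
  have hyc : Continuous y := continuous_iff_continuousAt.2 fun t ↦ (hy t).continuousAt
  have hγ : Continuous fun t ↦ (x t, y t) := hxc.prodMk hyc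
  refine ⟨fun t ↦ ?_, fun t ↦ ?_, (hf.continuous_pdx.comp hγ).mul hxc,
    (hf.continuous_pdy.comp hγ).mul hyc, (hg.continuous_pdx.comp hγ).mul hxc,
    (hg.continuous_pdy.comp hγ).mul hyc, hb, hc⟩
  · exact ((hf.differentiable one_ne_zero _).hasDerivAt_comp_prodMk (hx t) (hy t)).congr_deriv
      (by ring)
  · exact ((hg.differentiable one_ne_zero _).hasDerivAt_comp_prodMk (hx t) (hy t)).congr_deriv
      (by ring)

theorem no_limit_cycle_strict_mutualism_attractive_general
    (f g : ℝ × ℝ → ℝ) (hf : ContDiff ℝ 1 f) (hg : ContDiff ℝ 1 g)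
    (U : Set (ℝ × ℝ)) (hUsub : U ⊆ Ioi (0:ℝ) ×ˢ Ioi (0:ℝ))
    (hfy : ∀ p ∈ U, pdy f p > 0) (hgx : ∀ p ∈ U, pdx g p > 0) :
    ¬ ∃ x y : ℝ → ℝ,
      (∀ t, HasDerivAt x (x t * f (x t, y t)) t) ∧
      (∀ t, HasDerivAt y (y t * g (x t, y t)) t) ∧
      (∀ t, (x t, y t) ∈ U) ∧
      (∃ T > 0, ∀ t, x (t + T) = x t ∧ y (t + T) = y t) ∧
      (∃ t s, (x t, y t) ≠ (x s, y s)) := by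
  rintro ⟨x, y, hx, hy, hU, ⟨T, hT, hper⟩, t, s, hne⟩
  have hxpos (t : ℝ) : 0 < x t := (hUsub (hU t)).1
  have hypos (t : ℝ) : 0 < y t := (hUsub (hU t)).2
  have hcoop := IsCooperative.of_kolmogorov hf hg hx hy
    (fun t ↦ mul_pos (hfy _ (hU t)) (hypos t)) (fun t ↦ mul_pos (hgx _ (hU t)) (hxpos t))
  have hγ : Periodic (fun t ↦ (x t, y t)) T := fun t ↦ Prod.ext (hper t).1 (hper t).2
  refine hne (Prod.ext ?_ ?_)
  · exact Periodic.eq_of_hasDerivAt_mul (fun t ↦ (hper t).1) hT hxpos hx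
      (hcoop.nonneg_or_nonpos_of_periodic hT (hγ.comp f)) t s
  · exact Periodic.eq_of_hasDerivAt_mul (fun t ↦ (hper t).2) hT hypos hy
      (hcoop.swap.nonneg_or_nonpos_of_periodic hT (hγ.comp g)) t s

/-- Theorem 4.2: on a convex open region of the positive quadrant where
∂f/∂y > 0, ∂g/∂x > 0 (strict mutualism) and ∂f/∂x < 0, ∂g/∂y < 0 (the sign
configuration near an attractive strictly mutualistic equilibrium), the system
ẋ = x f(x,y), ẏ = y g(x,y) has no nonconstant periodic solution contained in
the region; in particular no limit cycle lies in it. -/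
theorem no_limit_cycle_strict_mutualism_attractive
    (f g : ℝ × ℝ → ℝ) (hf : ContDiff ℝ 1 f) (hg : ContDiff ℝ 1 g)
    (U : Set (ℝ × ℝ)) (hUsub : U ⊆ Ioi (0:ℝ) ×ˢ Ioi (0:ℝ))
    (hUconv : Convex ℝ U) (hUopen : IsOpen U)
    (hfy : ∀ p ∈ U, pdy f p > 0) (hgx : ∀ p ∈ U, pdx g p > 0)
    (hfx : ∀ p ∈ U, pdx f p < 0) (hgy : ∀ p ∈ U, pdy g p < 0) :
    ¬ ∃ x y : ℝ → ℝ,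
      (∀ t, HasDerivAt x (x t * f (x t, y t)) t) ∧
      (∀ t, HasDerivAt y (y t * g (x t, y t)) t) ∧
      (∀ t, (x t, y t) ∈ U) ∧
      (∃ T > 0, ∀ t, x (t + T) = x t ∧ y (t + T) = y t) ∧
      (∃ t s, (x t, y t) ≠ (x s, y s)) :=
  no_limit_cycle_strict_mutualism_attractive_general f g hf hg U hUsub hfy hgx
end

section
/- Let f, g : ℝ² → ℝ be C¹, let a, b > 0, and suppose f(a,y) < 0 for all y ∈ [0,b] and g(x,b) < 0 for all x ∈ [0,a]. Then the rectangle [0,a]×[0,b] is positively invariant: for every solution (x(t), y(t)) of the system ẋ = x·f(x,y), ẏ = y·g(x,y) defined on an interval [0,T] with (x(0), y(0)) ∈ [0,a]×[0,b], one has (x(t), y(t)) ∈ [0,a]×[0,b] for all t ∈ [0,T] (the trapping-region step in the proofs of Theorems 4.3 and 4.4: no trajectory can exit across the boundary of the rectangular region). -/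
/-!
The lower edges are invariant because each coordinate solves a linear equation `z' = z F` with
`F` continuous: by Grönwall a solution vanishing at some time vanishes from then on, so `z`
cannot change sign. The upper edges are handled by continuous induction along `[0, T]`: while the
solution is in the rectangle, a coordinate that is below its bound stays below by continuity, and
one that sits on its bound has negative right derivative there, so it moves inward.
-/

open Set Filter Topology

theorem HasDerivWithinAt.eventually_lt_right {f : ℝ → ℝ} {f' x : ℝ}
    (hf : HasDerivWithinAt f f' (Ici x) x) (hf' : f' < 0) : ∀ᶠ z in 𝓝[>] x, f z < f x := by
  filter_upwards [hf.Ioi_of_Ici.limsup_slope_le' (lt_irrefl x) hf', self_mem_nhdsWithin]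
    with z hslope hxz
  rw [slope_def_field, div_neg_iff] at hslope
  rcases hslope with ⟨-, h⟩ | ⟨h, -⟩ <;> linarith [mem_Ioi.mp hxz]

theorem HasDerivWithinAt.Ici_of_Icc {f : ℝ → ℝ} {f' a b t : ℝ}
    (hf : HasDerivWithinAt f f' (Icc a b) t) (ht : t ∈ Ico a b) :
    HasDerivWithinAt f f' (Ici t) t :=
  hf.mono_of_mem_nhdsWithin (Icc_mem_nhdsGE_of_mem ht)

theorem nonneg_of_deriv_right_eq_mul {z F : ℝ → ℝ} {a b : ℝ} (hz : ContinuousOn z (Icc a b))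
    (hz' : ∀ t ∈ Ico a b, HasDerivWithinAt z (z t * F t) (Ici t) t)
    (hF : ContinuousOn F (Icc a b)) (ha : 0 ≤ z a) : ∀ t ∈ Icc a b, 0 ≤ z t := by
  intro t ht
  by_contra! hneg
  obtain ⟨s, hs, hzs⟩ : ∃ s ∈ Icc a t, z s = 0 :=
    intermediate_value_Icc' ht.1 (hz.mono (Icc_subset_Icc_right ht.2)) ⟨hneg.le, ha⟩
  have hsub : Icc s t ⊆ Icc a b := Icc_subset_Icc hs.1 ht.2
  obtain ⟨K, hK⟩ := isCompact_Icc.exists_bound_of_continuousOn hF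
  have hzero := eq_zero_of_abs_deriv_le_mul_abs_self_of_eq_zero_right (hz.mono hsub)
    (fun u hu => hz' u ⟨hs.1.trans hu.1, hu.2.trans_le ht.2⟩) hzs
    (fun u hu => by
      rw [norm_mul, mul_comm]
      exact mul_le_mul_of_nonneg_right (hK u (hsub (Ico_subset_Icc_self hu))) (norm_nonneg _))
    t ⟨hs.2, le_rfl⟩
  exact hneg.ne hzero

theorem forall_le_of_deriv_right_neg_on_faces {ι : Type*} [Finite ι] {z z' : ι → ℝ → ℝ}
    {c : ι → ℝ} {a b : ℝ} (hz : ∀ i, ContinuousOn (z i) (Icc a b))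
    (hz' : ∀ i, ∀ t ∈ Ico a b, HasDerivWithinAt (z i) (z' i t) (Ici t) t)
    (ha : ∀ i, z i a ≤ c i)
    (hface : ∀ t ∈ Ico a b, (∀ j, z j t ≤ c j) → ∀ i, z i t = c i → z' i t < 0) :
    ∀ t ∈ Icc a b, ∀ i, z i t ≤ c i := by
  have hclosed : IsClosed ({t | ∀ i, z i t ≤ c i} ∩ Icc a b) := by
    rw [inter_comm]
    exact (continuousOn_pi.2 fun i => hz i).preimage_isClosed_of_isClosed isClosed_Icc
      (isClosed_Iic (a := c))
  refine fun t ht => hclosed.Icc_subset_of_forall_mem_nhdsWithin ha ?_ ht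
  rintro t ⟨hle, ht⟩
  refine eventually_all.2 fun i => ?_
  rcases (hle i).lt_or_eq with hlt | heq
  · exact (((hz' i t ht).continuousWithinAt.mono Ioi_subset_Ici_self).eventually
      (gt_mem_nhds hlt)).mono fun _ => le_of_lt
  · exact ((hz' i t ht).eventually_lt_right (hface t ht hle i heq)).mono
      fun _ hu => heq ▸ hu.le

/-- Trapping-region step in the proofs of Theorems 4.3 and 4.4: if the vector
field of ẋ = x f(x,y), ẏ = y g(x,y) points inward on the right and top edges
of the rectangle [0,a]×[0,b], then the rectangle is positively invariant:
no solution starting in it can exit across its boundary. -/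
theorem rectangle_positively_invariant
    (f g : ℝ × ℝ → ℝ) (hf : ContDiff ℝ 1 f) (hg : ContDiff ℝ 1 g)
    (a b : ℝ) (ha : 0 < a) (hb : 0 < b)
    (hright : ∀ y ∈ Icc (0:ℝ) b, f (a, y) < 0)
    (htop : ∀ x ∈ Icc (0:ℝ) a, g (x, b) < 0)
    (T : ℝ) (x y : ℝ → ℝ)
    (hx : ∀ t ∈ Icc (0:ℝ) T, HasDerivWithinAt x (x t * f (x t, y t)) (Icc 0 T) t)
    (hy : ∀ t ∈ Icc (0:ℝ) T, HasDerivWithinAt y (y t * g (x t, y t)) (Icc 0 T) t)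
    (hinit : x 0 ∈ Icc (0:ℝ) a ∧ y 0 ∈ Icc (0:ℝ) b) :
    ∀ t ∈ Icc (0:ℝ) T, x t ∈ Icc (0:ℝ) a ∧ y t ∈ Icc (0:ℝ) b := by
  have hxc : ContinuousOn x (Icc 0 T) := fun t ht => (hx t ht).continuousWithinAt
  have hyc : ContinuousOn y (Icc 0 T) := fun t ht => (hy t ht).continuousWithinAt
  have hx' t (ht : t ∈ Ico (0:ℝ) T) := (hx t (Ico_subset_Icc_self ht)).Ici_of_Icc ht
  have hy' t (ht : t ∈ Ico (0:ℝ) T) := (hy t (Ico_subset_Icc_self ht)).Ici_of_Icc ht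
  have hx_nonneg := nonneg_of_deriv_right_eq_mul hxc hx'
    (hf.continuous.comp_continuousOn (hxc.prodMk hyc)) hinit.1.1
  have hy_nonneg := nonneg_of_deriv_right_eq_mul hyc hy'
    (hg.continuous.comp_continuousOn (hxc.prodMk hyc)) hinit.2.1
  have hupper := forall_le_of_deriv_right_neg_on_faces (z := ![x, y]) (c := ![a, b])
    (z' := ![fun t => x t * f (x t, y t), fun t => y t * g (x t, y t)])
    (Fin.forall_fin_two.2 ⟨hxc, hyc⟩) (Fin.forall_fin_two.2 ⟨hx', hy'⟩)
    (Fin.forall_fin_two.2 ⟨hinit.1.2, hinit.2.2⟩) <| by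
      intro t ht hle
      have ht' := Ico_subset_Icc_self ht
      have hin : x t ∈ Icc 0 a ∧ y t ∈ Icc 0 b :=
        ⟨⟨hx_nonneg t ht', hle 0⟩, ⟨hy_nonneg t ht', hle 1⟩⟩
      refine Fin.forall_fin_two.2 ⟨fun h => ?_, fun h => ?_⟩
      · simp only [Matrix.cons_val_zero] at h ⊢
        exact h ▸ mul_neg_of_pos_of_neg ha (hright _ hin.2)
      · simp only [Matrix.cons_val_one, Matrix.cons_val_zero] at h ⊢
        exact h ▸ mul_neg_of_pos_of_neg hb (htop _ hin.1)
  exact fun t ht => ⟨⟨hx_nonneg t ht, hupper t ht 0⟩, ⟨hy_nonneg t ht, hupper t ht 1⟩⟩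
end
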